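/- arXiv:math/0409545 — 4 statements merged into one kernel-verified Lean document; each statement's English description precedes it below -/
import Mathlib

section
/- For every real number q > p̲, the function s ↦ 1 − Σ_{i≥1} s_i^{q+1} is ν-integrable on S; in particular Φ(q) is a well-defined finite real number for every q > p̲. -/
open MeasureTheory Real Set Filter

noncomputable section

/-- Real power with the convention `0 ^ r = 0` for every exponent `r`. -/
def pw (x r : ℝ) : ℝ := if x = 0 then 0 else x ^ r

/-- The state space `S` of ranked mass configurations: nonincreasing nonnegative
sequences with total sum at most `1` (sum condition stated via partial sums). -/
def inS (s : ℕ → ℝ) : Prop :=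
  (∀ i, 0 ≤ s i) ∧ (∀ i, s (i + 1) ≤ s i) ∧ ∀ F : Finset ℕ, ∑ i ∈ F, s i ≤ 1

/-- The configuration `(1, 0, 0, …)`. -/
def oneConf : ℕ → ℝ := fun i => if i = 0 then 1 else 0

/-- A dislocation measure: a measure on sequences, carried by `S`, giving no mass
to `(1,0,…)`, integrating `1 - s₁`, and conserving total mass (carried by
configurations with `Σ sᵢ = 1`). -/
structure IsDislocation (ν : Measure (ℕ → ℝ)) : Prop where
  carried : ν {s | ¬ (inS s ∧ HasSum s 1)} = 0
  no_one : ν {oneConf} = 0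
  int_one_sub : ∫⁻ s, ENNReal.ofReal (1 - s 0) ∂ν < ⊤

/-- `p̲ := inf {p ∈ ℝ : ∫_S Σ_{i≥2} sᵢ^{p+1} ν(ds) < ∞}`, as an extended real
(possibly `-∞`, and `+∞` if no `p` qualifies). -/
def pLow (ν : Measure (ℕ → ℝ)) : EReal :=
  sInf {x : EReal | ∃ p : ℝ, x = (p : EReal) ∧
    ∫⁻ s, ∑' i, ENNReal.ofReal (pw (s (i + 1)) (p + 1)) ∂ν < ⊤}

/-- `Φ(q) := ∫_S (1 - Σ_{i≥1} sᵢ^{q+1}) ν(ds)`. -/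
def Phi (ν : Measure (ℕ → ℝ)) (q : ℝ) : ℝ :=
  ∫ s, (1 - ∑' i, pw (s i) (q + 1)) ∂ν

/-! For `s ∈ S` with total mass `1` and `s ≠ (1,0,…)` (so `0 < s 1 ≤ s 0`), write
`Σᵢ sᵢ^r = s 0 ^ r + T_r` with `T_r = Σᵢ s (i+1) ^ r`. Bernoulli's inequality (for `r ≥ 1`)
and `x ≤ x ^ r` (for `r ≤ 1`) give `1 - s 0 ^ r ≤ max 1 r · (1 - s 0)`, while
`s 0 ^ r ≤ max 1 (s 1 ^ r) ≤ 1 + T_r`; hence `|1 - Σᵢ sᵢ^r| ≤ max 1 r · (1 - s 0) + 2 T_r`.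
Since `sᵢ ≤ 1`, `T_{q+1} ≤ T_{p+1}` for `p < q`, and choosing `p > p̲` with `∫ T_{p+1} dν < ∞`
makes the right-hand side integrable. -/

lemma pw_of_pos {x : ℝ} (hx : 0 < x) (r : ℝ) : pw x r = x ^ r := if_neg hx.ne'

lemma pw_nonneg {x : ℝ} (hx : 0 ≤ x) (r : ℝ) : 0 ≤ pw x r := by
  unfold pw
  split_ifs
  · rfl
  · exact Real.rpow_nonneg hx r

lemma pw_le_pw_of_exponent_ge {x a b : ℝ} (hx0 : 0 ≤ x) (hx1 : x ≤ 1) (hab : a ≤ b) :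
    pw x b ≤ pw x a := by
  rcases hx0.eq_or_lt with rfl | hx
  · simp [pw]
  · rw [pw_of_pos hx, pw_of_pos hx]
    exact Real.rpow_le_rpow_of_exponent_ge hx hx1 hab

lemma pw_le_max_one_pw {x y : ℝ} (hy : 0 < y) (hyx : y ≤ x) (hx1 : x ≤ 1) (r : ℝ) :
    pw x r ≤ max 1 (pw y r) := by
  rw [pw_of_pos (hy.trans_le hyx), pw_of_pos hy]
  rcases le_or_gt 0 r with hr | hr
  · exact (Real.rpow_le_one (hy.le.trans hyx) hx1 hr).trans (le_max_left _ _)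
  · exact (Real.rpow_le_rpow_of_nonpos hy hyx hr.le).trans (le_max_right _ _)

lemma measurable_pw (r : ℝ) : Measurable (pw · r) :=
  Measurable.ite (measurableSet_singleton 0) measurable_const (measurable_id.pow_const r)

lemma one_sub_rpow_le {x : ℝ} (hx0 : 0 ≤ x) (hx1 : x ≤ 1) (r : ℝ) :
    1 - x ^ r ≤ max 1 r * (1 - x) := by
  rcases le_total r 1 with hr1 | hr1
  · have := Real.self_le_rpow_of_le_one hx0 hx1 hr1
    nlinarith [le_max_left 1 r]
  · have := one_add_mul_self_le_rpow_one_add (show -1 ≤ x - 1 by linarith) hr1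
    rw [add_sub_cancel] at this
    nlinarith [le_max_right 1 r]

section Comparison

variable {ι : Type*} {x : ι → ℝ} {a b : ℝ}

lemma summable_pw_of_exponent_le (h0 : ∀ i, 0 ≤ x i) (h1 : ∀ i, x i ≤ 1) (hab : a ≤ b)
    (ha : Summable fun i => pw (x i) a) : Summable fun i => pw (x i) b :=
  ha.of_nonneg_of_le (fun i => pw_nonneg (h0 i) b)
    fun i => pw_le_pw_of_exponent_ge (h0 i) (h1 i) hab

lemma tsum_pw_le_of_exponent_le (h0 : ∀ i, 0 ≤ x i) (h1 : ∀ i, x i ≤ 1) (hab : a ≤ b)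
    (ha : Summable fun i => pw (x i) a) : ∑' i, pw (x i) b ≤ ∑' i, pw (x i) a :=
  (summable_pw_of_exponent_le h0 h1 hab ha).tsum_le_tsum
    (fun i => pw_le_pw_of_exponent_ge (h0 i) (h1 i) hab) ha

end Comparison

namespace inS

variable {s : ℕ → ℝ}

lemma nonneg (hs : inS s) (i : ℕ) : 0 ≤ s i := hs.1 i

lemma le_one (hs : inS s) (i : ℕ) : s i ≤ 1 := by
  simpa using hs.2.2 {i}

lemma antitone (hs : inS s) : Antitone s := antitone_nat_of_succ_le hs.2.1

lemma pos_one_of_hasSum_one (hs : inS s) (h1 : HasSum s 1) (hne : s ≠ oneConf) : 0 < s 1 := by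
  refine (hs.nonneg 1).lt_of_ne fun h0 => hne ?_
  have htail : ∀ i, s (i + 1) = 0 := fun i =>
    le_antisymm ((hs.antitone (by omega : 1 ≤ i + 1)).trans h0.ge) (hs.nonneg _)
  have hhead : s 0 = 1 := by
    simpa [h1.tsum_eq, htail] using h1.summable.tsum_eq_zero_add.symm
  funext i
  cases i <;> simp [oneConf, hhead, htail]

lemma abs_one_sub_tsum_pw_le (hs : inS s) (h1 : HasSum s 1) (hne : s ≠ oneConf) (r : ℝ)
    (hsum : Summable fun i => pw (s (i + 1)) r) :
    |1 - ∑' i, pw (s i) r| ≤ max 1 r * (1 - s 0) + 2 * ∑' i, pw (s (i + 1)) r := by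
  have hs1 := hs.pos_one_of_hasSum_one h1 hne
  have hs10 : s 1 ≤ s 0 := hs.antitone zero_le_one
  have hfull : Summable fun i => pw (s i) r := (summable_nat_add_iff 1).mp hsum
  rw [hfull.tsum_eq_zero_add, abs_sub_le_iff]
  set T := ∑' i, pw (s (i + 1)) r
  have hT : 0 ≤ T := tsum_nonneg fun i => pw_nonneg (hs.nonneg _) r
  have hs1T : pw (s 1) r ≤ T := hsum.le_tsum 0 fun j _ => pw_nonneg (hs.nonneg _) r
  have hhead_lower : 1 - pw (s 0) r ≤ max 1 r * (1 - s 0) := by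
    rw [pw_of_pos (hs1.trans_le hs10)]
    exact one_sub_rpow_le (hs.nonneg 0) (hs.le_one 0) r
  have hhead_upper : pw (s 0) r ≤ 1 + T :=
    (pw_le_max_one_pw hs1 hs10 (hs.le_one 0) r).trans (max_le (by linarith) (by linarith))
  have hM : 0 ≤ max 1 r * (1 - s 0) :=
    mul_nonneg (zero_le_one.trans (le_max_left _ _)) (sub_nonneg.2 (hs.le_one 0))
  constructor <;> linarith

end inS

lemma exists_lt_lintegral_tsum_pw_lt_top_of_pLow_lt {ν : Measure (ℕ → ℝ)} {q : ℝ}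
    (hq : pLow ν < q) :
    ∃ p < q, ∫⁻ s, ∑' i, ENNReal.ofReal (pw (s (i + 1)) (p + 1)) ∂ν < ⊤ := by
  obtain ⟨_, ⟨p, rfl, hp⟩, hpq⟩ := sInf_lt_iff.mp hq
  exact ⟨p, EReal.coe_lt_coe_iff.mp hpq, hp⟩

section TsumOfReal

variable {α ι : Type*} [MeasurableSpace α] [Countable ι] {μ : Measure α} {f : ι → α → ℝ}

lemma ae_summable_of_lintegral_tsum_ofReal_lt_top (hf : ∀ i, Measurable (f i))
    (hnn : ∀ᵐ a ∂μ, ∀ i, 0 ≤ f i a) (h : ∫⁻ a, ∑' i, ENNReal.ofReal (f i a) ∂μ < ⊤) :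
    ∀ᵐ a ∂μ, Summable fun i => f i a := by
  filter_upwards [hnn, ae_lt_top (Measurable.tsum fun i => (hf i).ennreal_ofReal) h.ne]
    with a ha hfin
  exact (ENNReal.summable_toReal hfin.ne).congr fun i => ENNReal.toReal_ofReal (ha i)

lemma integrable_tsum_of_lintegral_tsum_ofReal_lt_top (hf : ∀ i, Measurable (f i))
    (hnn : ∀ᵐ a ∂μ, ∀ i, 0 ≤ f i a) (h : ∫⁻ a, ∑' i, ENNReal.ofReal (f i a) ∂μ < ⊤) :
    Integrable (fun a => ∑' i, f i a) μ := by
  refine (integrable_toReal_of_lintegral_ne_top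
    (Measurable.tsum fun i => (hf i).ennreal_ofReal).aemeasurable h.ne).congr ?_
  filter_upwards [hnn] with a ha
  rw [ENNReal.tsum_toReal_eq fun _ => ENNReal.ofReal_ne_top]
  exact tsum_congr fun i => ENNReal.toReal_ofReal (ha i)

end TsumOfReal

namespace IsDislocation

variable {ν : Measure (ℕ → ℝ)}

lemma ae_inS_hasSum_ne_oneConf (hν : IsDislocation ν) :
    ∀ᵐ s ∂ν, inS s ∧ HasSum s 1 ∧ s ≠ oneConf := by
  filter_upwards [ae_iff.mpr hν.carried, compl_mem_ae_iff.mpr hν.no_one] with s hs hne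
  exact ⟨hs.1, hs.2, hne⟩

lemma integrable_one_sub_apply_zero (hν : IsDislocation ν) : Integrable (fun s => 1 - s 0) ν := by
  refine (lintegral_ofReal_ne_top_iff_integrable
    (measurable_const.sub (measurable_pi_apply 0)).aestronglyMeasurable ?_).mp
    hν.int_one_sub.ne
  filter_upwards [hν.ae_inS_hasSum_ne_oneConf] with s hs
  exact sub_nonneg.2 (hs.1.le_one 0)

end IsDislocation

/-- For every `q > p̲`, the function `s ↦ 1 - Σ_{i≥1} sᵢ^{q+1}` is `ν`-integrable
(in particular the series converges `ν`-a.e.), so `Φ(q)` is a well-defined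
finite real number. -/
theorem phi_well_defined (ν : Measure (ℕ → ℝ)) (hν : IsDislocation ν)
    (q : ℝ) (hq : pLow ν < (q : EReal)) :
    (∀ᵐ s ∂ν, Summable fun i => pw (s i) (q + 1)) ∧
      Integrable (fun s => 1 - ∑' i, pw (s i) (q + 1)) ν := by
  obtain ⟨p, hpq, hp⟩ := exists_lt_lintegral_tsum_pw_lt_top_of_pLow_lt hq
  have hexp : p + 1 ≤ q + 1 := by linarith
  have hgood := hν.ae_inS_hasSum_ne_oneConf
  have hmeas : ∀ r i, Measurable fun s : ℕ → ℝ => pw (s i) r := fun r i =>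
    (measurable_pw r).comp (measurable_pi_apply i)
  have hnn : ∀ᵐ s ∂ν, ∀ i, 0 ≤ pw (s (i + 1)) (p + 1) :=
    hgood.mono fun s hs i => pw_nonneg (hs.1.nonneg _) _
  have hsum_p := ae_summable_of_lintegral_tsum_ofReal_lt_top (fun i => hmeas _ _) hnn hp
  have hsum_q : ∀ᵐ s ∂ν, Summable fun i => pw (s (i + 1)) (q + 1) := by
    filter_upwards [hgood, hsum_p] with s hs h
    exact summable_pw_of_exponent_le (fun i => hs.1.nonneg _) (fun i => hs.1.le_one _) hexp h
  refine ⟨hsum_q.mono fun s h => (summable_nat_add_iff 1).mp h, ?_⟩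
  refine Integrable.mono' ((hν.integrable_one_sub_apply_zero.const_mul (max 1 (q + 1))).add
    ((integrable_tsum_of_lintegral_tsum_ofReal_lt_top (fun i => hmeas _ _) hnn hp).const_mul 2))
    (measurable_const.sub (Measurable.tsum (hmeas _))).aestronglyMeasurable ?_
  filter_upwards [hgood, hsum_p, hsum_q] with s ⟨hs, h1, hne⟩ hp' hq'
  calc ‖1 - ∑' i, pw (s i) (q + 1)‖
      ≤ max 1 (q + 1) * (1 - s 0) + 2 * ∑' i, pw (s (i + 1)) (q + 1) :=
        hs.abs_one_sub_tsum_pw_le h1 hne _ hq'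
    _ ≤ max 1 (q + 1) * (1 - s 0) + 2 * ∑' i, pw (s (i + 1)) (p + 1) := by
        gcongr _ + 2 * ?_
        exact tsum_pw_le_of_exponent_le (fun i => hs.nonneg _) (fun i => hs.le_one _) hexp hp'

end
end

section
/- Let f : (0,∞) → ℝ be continuous and suppose that for every h > 0 the sequence (f(nh))_{n∈ℕ} converges as n → ∞. Then there exists L ∈ ℝ such that f(t) → L as t → ∞; in particular lim_{n→∞} f(nh) = L for every h > 0. -/
open Set Filter

lemma ck_rat (f : ℝ → ℝ)
    (hconv : ∀ h : ℝ, 0 < h →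
      ∃ l : ℝ, Tendsto (fun n : ℕ => f (n * h)) atTop (nhds l))
    {L : ℝ} (hL : Tendsto (fun n : ℕ => f (n * 1)) atTop (nhds L))
    (q : ℚ) (hq : 0 < q) :
    Tendsto (fun n : ℕ => f (n * (q : ℝ))) atTop (nhds L) := by
  obtain ⟨l, hl⟩ := hconv q (by exact_mod_cast hq)
  suffices hlL : l = L by rwa [hlL] at hl
  have hden : 0 < q.den := q.pos
  have hnum : 0 < q.num := Rat.num_pos.2 hq
  have hmono : Tendsto (fun n : ℕ => n * q.den) atTop atTop :=
    tendsto_atTop_atTop.2 fun b => ⟨b, fun a ha =>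
      le_trans ha (Nat.le_mul_of_pos_right a hden)⟩
  have hmono2 : Tendsto (fun n : ℕ => n * q.num.toNat) atTop atTop :=
    tendsto_atTop_atTop.2 fun b => ⟨b, fun a ha =>
      le_trans ha (Nat.le_mul_of_pos_right a (by omega))⟩
  have h1 : Tendsto (fun n : ℕ => f (((n * q.den : ℕ) : ℝ) * (q : ℝ)))
      atTop (nhds l) := hl.comp hmono
  have h2 : Tendsto (fun n : ℕ => f (((n * q.num.toNat : ℕ) : ℝ) * 1))
      atTop (nhds L) := hL.comp hmono2
  have key : (fun n : ℕ => f (((n * q.den : ℕ) : ℝ) * (q : ℝ))) =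
      fun n : ℕ => f (((n * q.num.toNat : ℕ) : ℝ) * 1) := by
    funext n
    congr 1
    have hd : ((q.den : ℝ)) * (q : ℝ) = (q.num : ℝ) := by
      rw [Rat.cast_def]
      field_simp
    push_cast [Int.toNat_of_nonneg hnum.le]
    rw [mul_assoc, hd]
    have hnn : ((q.num.toNat : ℕ) : ℝ) = (q.num : ℝ) := by
      exact_mod_cast Int.toNat_of_nonneg hnum.le
    rw [hnn]; ring
  rw [key] at h1
  exact tendsto_nhds_unique h1 h2

lemma ck_baire (f : ℝ → ℝ) (hf : ContinuousOn f (Set.Ioi 0))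
    (hconv : ∀ h : ℝ, 0 < h →
      ∃ l : ℝ, Tendsto (fun n : ℕ => f (n * h)) atTop (nhds l))
    {ε : ℝ} (hε : 0 < ε) :
    ∃ (m : ℕ) (c d : ℝ), 1 ≤ c ∧ c < d ∧ d ≤ 2 ∧
      ∀ h ∈ Icc c d, ∀ n n' : ℕ, m + 1 ≤ n → m + 1 ≤ n' →
        |f (n * h) - f (n' * h)| ≤ ε := by
  haveI : Nonempty ↥(Icc (1:ℝ) 2) :=
    Set.Nonempty.to_subtype (nonempty_Icc.2 one_le_two)
  set F : ℕ → Set ↥(Icc (1:ℝ) 2) := fun m =>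
    {x | ∀ n n' : ℕ, m + 1 ≤ n → m + 1 ≤ n' →
      |f (n * (x : ℝ)) - f (n' * (x : ℝ))| ≤ ε} with hF
  have hcont : ∀ n : ℕ, 1 ≤ n →
      Continuous fun x : ↥(Icc (1:ℝ) 2) => f (n * (x : ℝ)) := by
    intro n hn
    apply hf.comp_continuous
    · exact (continuous_const.mul continuous_subtype_val)
    · intro x
      have hx1 : (1:ℝ) ≤ (x:ℝ) := x.2.1
      have hn1 : (1:ℝ) ≤ (n:ℝ) := by exact_mod_cast hn
      have : (0:ℝ) < (n:ℝ) * (x:ℝ) := by nlinarith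
      exact this
  have hclosed : ∀ m, IsClosed (F m) := by
    intro m
    have : F m = ⋂ (n : ℕ) (n' : ℕ) (_ : m + 1 ≤ n) (_ : m + 1 ≤ n'),
        {x : ↥(Icc (1:ℝ) 2) | |f (n * (x : ℝ)) - f (n' * (x : ℝ))| ≤ ε} := by
      ext x
      simp only [hF, mem_setOf_eq, mem_iInter]
    rw [this]
    refine isClosed_iInter fun n => isClosed_iInter fun n' =>
      isClosed_iInter fun hn => isClosed_iInter fun hn' => ?_
    exact isClosed_le (((hcont n (by omega)).sub (hcont n' (by omega))).abs)
      continuous_const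
  have hcover : ⋃ m, F m = univ := by
    apply eq_univ_of_forall
    intro x
    obtain ⟨l, hl⟩ := hconv (x : ℝ) (lt_of_lt_of_le one_pos x.2.1)
    obtain ⟨N, hN⟩ := Metric.tendsto_atTop.1 hl (ε / 2) (by linarith)
    refine mem_iUnion.2 ⟨N, fun n n' hn hn' => ?_⟩
    have h1 := hN n (by omega)
    have h2 := hN n' (by omega)
    rw [Real.dist_eq] at h1 h2
    have := abs_sub_le (f (n * (x:ℝ))) l (f (n' * (x:ℝ)))
    rw [abs_sub_comm l _] at this
    linarith
  obtain ⟨m, x, hx⟩ := nonempty_interior_of_iUnion_of_closed hclosed hcover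
  rw [mem_interior_iff_mem_nhds, Metric.mem_nhds_iff] at hx
  obtain ⟨r, hr, hball⟩ := hx
  have hx1 : (1:ℝ) ≤ (x:ℝ) := x.2.1
  have hx2 : (x:ℝ) ≤ 2 := x.2.2
  refine ⟨m, max 1 ((x:ℝ) - r / 2), min 2 ((x:ℝ) + r / 2), le_max_left _ _,
    max_lt (lt_min one_lt_two (by linarith)) (lt_min (by linarith) (by linarith)),
    min_le_left _ _, ?_⟩
  intro h hh n n' hn hn'
  have hh12 : h ∈ Icc (1:ℝ) 2 :=
    ⟨le_trans (le_max_left _ _) hh.1, le_trans hh.2 (min_le_left _ _)⟩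
  have hmem : (⟨h, hh12⟩ : ↥(Icc (1:ℝ) 2)) ∈ Metric.ball x r := by
    rw [Metric.mem_ball, Subtype.dist_eq, Real.dist_eq]
    have h1 : (x:ℝ) - r / 2 ≤ h := le_trans (le_max_right _ _) hh.1
    have h2 : h ≤ (x:ℝ) + r / 2 := le_trans hh.2 (min_le_right _ _)
    show |h - (x:ℝ)| < r
    have : |h - (x:ℝ)| ≤ r / 2 := abs_le.2 ⟨by linarith, by linarith⟩
    linarith
  exact hball hmem n n' hn hn'

set_option maxHeartbeats 1000000 in
/-- The Croft–Kingman lemma: if `f : (0,∞) → ℝ` is continuous and, for every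
`h > 0`, the sequence `(f(nh))ₙ` converges as `n → ∞`, then `f(t)` converges as
`t → ∞`, and all the limits along arithmetic progressions coincide with the
limit at infinity. -/
theorem croft_kingman (f : ℝ → ℝ) (hf : ContinuousOn f (Set.Ioi 0))
    (hconv : ∀ h : ℝ, 0 < h →
      ∃ l : ℝ, Tendsto (fun n : ℕ => f (n * h)) atTop (nhds l)) :
    ∃ L : ℝ, Tendsto f atTop (nhds L) ∧
      ∀ h : ℝ, 0 < h → Tendsto (fun n : ℕ => f (n * h)) atTop (nhds L) := by
  obtain ⟨L, hL⟩ := hconv 1 one_pos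
  have hrat := ck_rat f hconv hL
  have main : Tendsto f atTop (nhds L) := by
    rw [Metric.tendsto_atTop]
    intro ε hε
    obtain ⟨m, c, d, hc1, hcd, hd2, hFp⟩ :=
      ck_baire f hf hconv (show (0:ℝ) < ε / 4 by linarith)
    set M : ℕ := m + 1 with hM
    have hMr : (1:ℝ) ≤ (M:ℝ) := by exact_mod_cast Nat.one_le_iff_ne_zero.2 (by omega)
    have hMpos : (0:ℝ) < (M:ℝ) := lt_of_lt_of_le one_pos hMr
    have hc0 : (0:ℝ) < c := lt_of_lt_of_le one_pos hc1
    have hd0 : (0:ℝ) < d := lt_trans hc0 hcd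
    -- uniform continuity on K = [M*c, M*d]
    have hKsub : Icc ((M:ℝ) * c) ((M:ℝ) * d) ⊆ Ioi (0:ℝ) := by
      intro y hy
      have : (0:ℝ) < (M:ℝ) * c := by positivity
      exact lt_of_lt_of_le this hy.1
    have hUC := (isCompact_Icc (a := (M:ℝ) * c) (b := (M:ℝ) * d)).uniformContinuousOn_of_continuous
      (hf.mono hKsub)
    obtain ⟨δ, hδ, hδP⟩ := Metric.uniformContinuousOn_iff.1 hUC (ε / 4) (by linarith)
    refine ⟨max ((M:ℝ) * d) (c * d / (d - c)) + 1, fun t ht => ?_⟩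
    have htMd : (M:ℝ) * d < t := by
      have := le_max_left ((M:ℝ) * d) (c * d / (d - c)); linarith
    have htcd : c * d / (d - c) < t := by
      have := le_max_right ((M:ℝ) * d) (c * d / (d - c)); linarith
    have htpos : 0 < t := lt_trans (by positivity) htMd
    set n : ℕ := ⌈t / d⌉₊ with hn
    have hn1 : t / d ≤ (n:ℝ) := Nat.le_ceil _
    have hn2 : (n:ℝ) < t / d + 1 := Nat.ceil_lt_add_one (by positivity)
    have hMn : M ≤ n := by
      have : (M:ℝ) < (n:ℝ) := by
        have : (M:ℝ) < t / d := by rw [lt_div_iff₀ hd0]; linarith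
        linarith
      exact_mod_cast this.le
    have hn0 : 0 < n := lt_of_lt_of_le (by omega) hMn
    have hnr : (0:ℝ) < (n:ℝ) := by exact_mod_cast hn0
    set h : ℝ := t / n with hh
    have hhd : h ≤ d := by
      rw [hh, div_le_iff₀ hnr]
      rw [div_le_iff₀ hd0] at hn1
      linarith [mul_comm d (n:ℝ)]
    have hhc : c ≤ h := by
      rw [hh, le_div_iff₀ hnr]
      -- n < t/d + 1 ≤ t/c  since  t > c*d/(d-c)
      have key : t / d + 1 ≤ t / c := by
        rw [div_add' _ _ _ (ne_of_gt hd0), div_le_div_iff₀ hd0 hc0]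
        have h1 : c * d < t * (d - c) := by
          rw [div_lt_iff₀ (by linarith : (0:ℝ) < d - c)] at htcd
          linarith
        nlinarith
      have : (n:ℝ) ≤ t / c := le_trans hn2.le key
      rw [le_div_iff₀ hc0] at this
      linarith [mul_comm (n:ℝ) c]
    have hhIcc : h ∈ Icc c d := ⟨hhc, hhd⟩
    have hth : t = (n:ℝ) * h := by
      rw [hh]; field_simp
    -- bound 1
    have b1 : |f t - f ((M:ℝ) * h)| ≤ ε / 4 := by
      rw [hth]
      exact hFp h hhIcc n M hMn le_rfl
    -- rational q close to h
    have hηpos : 0 < δ / (M:ℝ) := by positivity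
    have hlt : max c (h - δ / (M:ℝ)) < min d (h + δ / (M:ℝ)) := by
      apply max_lt (lt_min hcd ?_) (lt_min ?_ ?_) <;> [skip; skip; skip] <;>
        · first
          | (have := hhIcc.1; linarith)
          | (have := hhIcc.2; linarith)
    obtain ⟨q, hq1, hq2⟩ := exists_rat_btwn hlt
    have hqc : c < (q:ℝ) := lt_of_le_of_lt (le_max_left _ _) hq1
    have hqd : (q:ℝ) < d := lt_of_lt_of_le hq2 (min_le_left _ _)
    have hqh : |h - (q:ℝ)| < δ / (M:ℝ) := by
      have h1 : h - δ / (M:ℝ) < (q:ℝ) := lt_of_le_of_lt (le_max_right _ _) hq1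
      have h2 : (q:ℝ) < h + δ / (M:ℝ) := lt_of_lt_of_le hq2 (min_le_right _ _)
      rw [abs_lt]; constructor <;> linarith
    have hq0 : 0 < q := by
      have : (0:ℝ) < (q:ℝ) := lt_trans hc0 hqc
      exact_mod_cast this
    -- bound 2
    have hMhK : (M:ℝ) * h ∈ Icc ((M:ℝ) * c) ((M:ℝ) * d) :=
      ⟨mul_le_mul_of_nonneg_left hhc hMpos.le, mul_le_mul_of_nonneg_left hhd hMpos.le⟩
    have hMqK : (M:ℝ) * (q:ℝ) ∈ Icc ((M:ℝ) * c) ((M:ℝ) * d) :=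
      ⟨mul_le_mul_of_nonneg_left hqc.le hMpos.le, mul_le_mul_of_nonneg_left hqd.le hMpos.le⟩
    have b2 : |f ((M:ℝ) * h) - f ((M:ℝ) * (q:ℝ))| < ε / 4 := by
      have := hδP _ hMhK _ hMqK (by
        rw [Real.dist_eq]
        have : (M:ℝ) * h - (M:ℝ) * (q:ℝ) = (M:ℝ) * (h - (q:ℝ)) := by ring
        rw [this, abs_mul, abs_of_pos hMpos]
        calc (M:ℝ) * |h - (q:ℝ)| < (M:ℝ) * (δ / (M:ℝ)) := by
              exact mul_lt_mul_of_pos_left hqh hMpos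
          _ = δ := by field_simp)
      rwa [Real.dist_eq] at this
    -- bound 3
    have hqlim := hrat q hq0
    have b3 : |L - f ((M:ℝ) * (q:ℝ))| ≤ ε / 4 := by
      have htend : Tendsto (fun k : ℕ => |f (k * (q:ℝ)) - f ((M:ℝ) * (q:ℝ))|)
          atTop (nhds |L - f ((M:ℝ) * (q:ℝ))|) :=
        (hqlim.sub tendsto_const_nhds).abs
      apply le_of_tendsto htend
      filter_upwards [eventually_ge_atTop M] with k hk
      exact hFp (q:ℝ) ⟨hqc.le, hqd.le⟩ k M hk le_rfl
    rw [Real.dist_eq]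
    have t1 := abs_sub_le (f t) (f ((M:ℝ) * h)) L
    have t2 := abs_sub_le (f ((M:ℝ) * h)) (f ((M:ℝ) * (q:ℝ))) L
    rw [abs_sub_comm L _] at b3
    linarith
  refine ⟨L, main, fun h hh => ?_⟩
  have : Tendsto (fun n : ℕ => (n:ℝ) * h) atTop atTop :=
    tendsto_natCast_atTop_atTop.atTop_mul_const hh
  exact main.comp this
end

section
/- Let (Ω, 𝔉, P) be a probability space and let M, M₁, M₂, Y₁, Y₂ : Ω → ℝ be random variables such that: almost surely M ≤ Y₁M₁ + Y₂M₂; almost surely M ≤ 0, M₁ ≤ 0, M₂ ≤ 0, Y₁ > 0 and Y₂ > 0; M₁ and M₂ are independent; and M₁ and M₂ each have the same distribution as M. Then P(M = 0) ≤ P(M = 0)²; consequently P(M = 0) equals 0 or 1. -/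
open MeasureTheory Filter

/-- The zero–one argument for the limit of the derivative martingale: if
`M ≤ Y₁M₁ + Y₂M₂` a.s. with `M, M₁, M₂ ≤ 0` and `Y₁, Y₂ > 0` a.s., where `M₁`
and `M₂` are independent and each distributed as `M`, then
`P(M = 0) ≤ P(M = 0)²`, hence `P(M = 0) ∈ {0, 1}`. -/
theorem zero_one_derivative_martingale {Ω : Type*} [MeasurableSpace Ω]
    (P : Measure Ω) [IsProbabilityMeasure P]
    (M M₁ M₂ Y₁ Y₂ : Ω → ℝ)
    (hM : Measurable M) (hM₁ : Measurable M₁) (hM₂ : Measurable M₂)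
    (hdom : ∀ᵐ ω ∂P, M ω ≤ Y₁ ω * M₁ ω + Y₂ ω * M₂ ω)
    (hsign : ∀ᵐ ω ∂P, M ω ≤ 0 ∧ M₁ ω ≤ 0 ∧ M₂ ω ≤ 0 ∧ 0 < Y₁ ω ∧ 0 < Y₂ ω)
    (hindep : ProbabilityTheory.IndepFun M₁ M₂ P)
    (hid1 : Measure.map M₁ P = Measure.map M P)
    (hid2 : Measure.map M₂ P = Measure.map M P) :
    P {ω | M ω = 0} ≤ P {ω | M ω = 0} ^ 2 ∧
      (P {ω | M ω = 0} = 0 ∨ P {ω | M ω = 0} = 1) := by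
  have hsub : ∀ᵐ ω ∂P, M ω = 0 → (M₁ ω = 0 ∧ M₂ ω = 0) := by
    filter_upwards [hdom, hsign] with ω hd hs hM0
    obtain ⟨h0, h1, h2, hy1, hy2⟩ := hs
    have t1 : Y₁ ω * M₁ ω ≤ 0 := mul_nonpos_of_nonneg_of_nonpos hy1.le h1
    have t2 : Y₂ ω * M₂ ω ≤ 0 := mul_nonpos_of_nonneg_of_nonpos hy2.le h2
    rw [hM0] at hd
    have e1 : Y₁ ω * M₁ ω = 0 := le_antisymm t1 (by linarith)
    have e2 : Y₂ ω * M₂ ω = 0 := le_antisymm t2 (by linarith)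
    constructor
    · rcases mul_eq_zero.1 e1 with h | h
      · exact absurd h hy1.ne'
      · exact h
    · rcases mul_eq_zero.1 e2 with h | h
      · exact absurd h hy2.ne'
      · exact h
  have hle : P {ω | M ω = 0} ≤ P ({ω | M₁ ω = 0} ∩ {ω | M₂ ω = 0}) := by
    apply measure_mono_ae
    filter_upwards [hsub] with ω h hM0
    exact h hM0
  have hmeas0 : MeasurableSet ({0} : Set ℝ) := measurableSet_singleton 0
  have hprod : P ({ω | M₁ ω = 0} ∩ {ω | M₂ ω = 0})
      = P {ω | M₁ ω = 0} * P {ω | M₂ ω = 0} := by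
    have := hindep.measure_inter_preimage_eq_mul (s := ({0} : Set ℝ))
      (t := ({0} : Set ℝ)) hmeas0 hmeas0
    simpa [Set.preimage, Set.mem_singleton_iff] using this
  have h1 : P {ω | M₁ ω = 0} = P {ω | M ω = 0} := by
    have a := Measure.map_apply (μ := P) hM₁ hmeas0
    have b := Measure.map_apply (μ := P) hM hmeas0
    rw [hid1, b] at a
    simpa [Set.preimage, Set.mem_singleton_iff] using a.symm
  have h2 : P {ω | M₂ ω = 0} = P {ω | M ω = 0} := by
    have a := Measure.map_apply (μ := P) hM₂ hmeas0
    have b := Measure.map_apply (μ := P) hM hmeas0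
    rw [hid2, b] at a
    simpa [Set.preimage, Set.mem_singleton_iff] using a.symm
  have key : P {ω | M ω = 0} ≤ P {ω | M ω = 0} ^ 2 := by
    calc P {ω | M ω = 0} ≤ P ({ω | M₁ ω = 0} ∩ {ω | M₂ ω = 0}) := hle
    _ = P {ω | M ω = 0} * P {ω | M ω = 0} := by rw [hprod, h1, h2]
    _ = P {ω | M ω = 0} ^ 2 := (sq _).symm
  refine ⟨key, ?_⟩
  set p := P {ω | M ω = 0} with hp
  have hp1 : p ≤ 1 := prob_le_one
  have hge : p ^ 2 ≤ p := by
    calc p ^ 2 = p * p := sq p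
    _ ≤ 1 * p := mul_le_mul_left hp1 p
    _ = p := one_mul p
  have heq : p = p ^ 2 := le_antisymm key hge
  by_cases h0 : p = 0
  · exact Or.inl h0
  · right
    have hfin : p ≠ ⊤ := (lt_of_le_of_lt hp1 ENNReal.one_lt_top).ne
    have : p * 1 = p * p := by rw [mul_one, ← sq, ← heq]
    have := (ENNReal.mul_right_inj h0 hfin).mp this
    exact this.symm
end

section
/- Let (Ω, 𝔉, P) be a probability space. Let (a_i)_{i∈ℕ} be nonnegative integrable random variables with Σ_i E[a_i] < ∞, and for each i ∈ ℕ let (M_i(t))_{t∈[0,∞)} be nonnegative integrable random variables such that E[a_i · M_i(t)] = E[a_i] for all i and t, and such that for each i, M_i(t) → 0 almost surely as t → ∞. Then Σ_{i∈ℕ} a_i M_i(t) → 0 in probability as t → ∞, i.e. for every ε > 0, P(Σ_i a_i M_i(t) > ε) → 0 as t → ∞. -/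
/-!
Fix `N`. The tail `∑_{i ≥ N} aᵢ Mᵢ(t)` has expectation `∑_{i ≥ N} E[aᵢ]` for every `t`, so by
Markov's inequality it exceeds `ε / 2` with probability small uniformly in `t` once `N` is large.
The head `∑_{i < N} aᵢ Mᵢ(t)` is a finite sum of terms tending to `0` almost surely, hence it tends
to `0` in probability.
-/

open MeasureTheory Filter Topology
open scoped NNReal ENNReal

namespace MeasureTheory

variable {Ω ι : Type*} [MeasurableSpace Ω] {μ : Measure Ω} {l : Filter ι}

theorem tendsto_measure_le_of_ae_tendsto_zero [IsFiniteMeasure μ] [l.IsCountablyGenerated]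
    {g : ι → Ω → ℝ≥0∞} (hg : ∀ t, AEMeasurable (g t) μ)
    (hlim : ∀ᵐ ω ∂μ, Tendsto (g · ω) l (𝓝 0)) {ε : ℝ≥0∞} (hε : 0 < ε) :
    Tendsto (fun t => μ {ω | ε ≤ g t ω}) l (𝓝 0) := by
  have hset t : NullMeasurableSet {ω | ε ≤ g t ω} μ :=
    nullMeasurableSet_le aemeasurable_const (hg t)
  -- dominated convergence for the indicators of `{ε ≤ g t}`, which vanish eventually a.e.
  have hindicator := tendsto_lintegral_filter_of_dominated_convergence' (μ := μ) (l := l)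
    (F := fun t => {ω | ε ≤ g t ω}.indicator 1) (f := 0) 1
    (Eventually.of_forall fun t => aemeasurable_const.indicator₀ (hset t))
    (Eventually.of_forall fun t => ae_of_all _ (Set.indicator_le fun _ _ => le_rfl))
    (by simp [measure_ne_top])
    (hlim.mono fun ω hω => tendsto_const_nhds.congr' <|
      (hω.eventually (gt_mem_nhds hε)).mono fun t ht => by simp [not_le.mpr ht])
  simpa [lintegral_indicator_one₀ (hset _)] using hindicator

theorem measure_lt_add_le_add_measure_half_le (A B : Ω → ℝ≥0∞) (ε : ℝ≥0∞) :
    μ {ω | ε < A ω + B ω} ≤ μ {ω | ε / 2 ≤ A ω} + μ {ω | ε / 2 ≤ B ω} := by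
  refine (measure_mono fun ω hω => ?_).trans (measure_union_le _ _)
  by_contra hsmall
  simp only [Set.mem_union, Set.mem_ofPred_eq, not_or, not_le] at hω hsmall
  exact (ENNReal.add_lt_add hsmall.1 hsmall.2).trans_eq (ENNReal.add_halves ε) |>.not_gt hω

theorem tendsto_measure_lt_tsum_of_ae_tendsto_zero_of_lintegral_le [IsFiniteMeasure μ]
    [l.IsCountablyGenerated] {f : ℕ → ι → Ω → ℝ≥0∞} {L : ℕ → ℝ≥0∞}
    (hf : ∀ i t, AEMeasurable (f i t) μ) (hlim : ∀ i, ∀ᵐ ω ∂μ, Tendsto (f i · ω) l (𝓝 0))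
    (hint : ∀ i t, ∫⁻ ω, f i t ω ∂μ ≤ L i) (hL : ∑' i, L i ≠ ∞) {ε : ℝ≥0∞} (hε : 0 < ε) :
    Tendsto (fun t => μ {ω | ε < ∑' i, f i t ω}) l (𝓝 0) := by
  obtain rfl | hε_top := eq_or_ne ε ∞
  · simpa using tendsto_const_nhds
  have hε2 : 0 < ε / 2 := ENNReal.half_pos hε.ne'
  have hε2_top : ε / 2 ≠ ∞ := ENNReal.div_ne_top hε_top two_ne_zero
  refine ENNReal.tendsto_nhds_zero.2 fun δ hδ => ?_
  have hδ2 : 0 < δ / 2 := ENNReal.half_pos hδ.ne'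
  obtain ⟨N, hN⟩ : ∃ N, ∑' i, L (i + N) ≤ δ / 2 * (ε / 2) :=
    (ENNReal.tendsto_nhds_zero.1 (ENNReal.tendsto_sum_nat_add L hL) _
      (ENNReal.mul_pos hδ2.ne' hε2.ne')).exists
  have htail t : μ {ω | ε / 2 ≤ ∑' i, f (i + N) t ω} ≤ δ / 2 :=
    calc _ ≤ (∑' i, ∫⁻ ω, f (i + N) t ω ∂μ) / (ε / 2) := by
          rw [← lintegral_tsum fun i => hf (i + N) t]
          exact meas_ge_le_lintegral_div (AEMeasurable.tsum fun i => hf (i + N) t)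
            hε2.ne' hε2_top
      _ ≤ δ / 2 * (ε / 2) / (ε / 2) := by
          gcongr
          exact (ENNReal.tsum_le_tsum fun i => hint _ t).trans hN
      _ = δ / 2 := ENNReal.mul_div_cancel_right hε2.ne' hε2_top
  have hhead : ∀ᶠ t in l, μ {ω | ε / 2 ≤ ∑ i ∈ Finset.range N, f i t ω} ≤ δ / 2 := by
    refine ENNReal.tendsto_nhds_zero.1 (tendsto_measure_le_of_ae_tendsto_zero
      (fun t => Finset.aemeasurable_fun_sum _ fun i _ => hf i t) ?_ hε2) _ hδ2
    filter_upwards [ae_all_iff.2 hlim] with ω hω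
    simpa using tendsto_finsetSum (Finset.range N) fun i _ => hω i
  filter_upwards [hhead] with t hhead_t
  calc μ {ω | ε < ∑' i, f i t ω}
      = μ {ω | ε < ∑ i ∈ Finset.range N, f i t ω + ∑' i, f (i + N) t ω} := by
        simp_rw [ENNReal.summable.sum_add_tsum_nat_add']
    _ ≤ δ / 2 + δ / 2 :=
        (measure_lt_add_le_add_measure_half_le _ _ ε).trans (add_le_add hhead_t (htail t))
    _ = δ := ENNReal.add_halves δ

end MeasureTheory

theorem sum_tendsto_zero_in_probability_general {Ω : Type*} [MeasurableSpace Ω]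
    (P : Measure Ω) [IsProbabilityMeasure P]
    (a : ℕ → Ω → ℝ) (ha_nn : ∀ i ω, 0 ≤ a i ω)
    (ha_sum : Summable fun i => ∫ ω, a i ω ∂P)
    (M : ℕ → ℝ≥0 → Ω → ℝ)
    (hM_nn : ∀ i t ω, 0 ≤ M i t ω)
    (haM_int : ∀ i t, Integrable (fun ω => a i ω * M i t ω) P)
    (haM_mean : ∀ i t, ∫ ω, a i ω * M i t ω ∂P = ∫ ω, a i ω ∂P)
    (hM_as : ∀ i, ∀ᵐ ω ∂P, Tendsto (fun t : ℝ≥0 => M i t ω) atTop (nhds 0))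
    (ε : ℝ) (hε : 0 < ε) :
    Tendsto (fun t : ℝ≥0 =>
        P {ω | ENNReal.ofReal ε < ∑' i, ENNReal.ofReal (a i ω * M i t ω)})
      atTop (nhds 0) := by
  have hlintegral i t :
      ∫⁻ ω, ENNReal.ofReal (a i ω * M i t ω) ∂P = ENNReal.ofReal (∫ ω, a i ω ∂P) := by
    rw [← haM_mean i t, ofReal_integral_eq_lintegral_ofReal (haM_int i t)
      (ae_of_all _ fun ω => mul_nonneg (ha_nn i ω) (hM_nn i t ω))]
  have hlim i : ∀ᵐ ω ∂P, Tendsto (fun t => ENNReal.ofReal (a i ω * M i t ω)) atTop (𝓝 0) := by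
    filter_upwards [hM_as i] with ω hω
    simpa using ENNReal.tendsto_ofReal (hω.const_mul (a i ω))
  exact tendsto_measure_lt_tsum_of_ae_tendsto_zero_of_lintegral_le
    (fun i t => (haM_int i t).aemeasurable.ennreal_ofReal) hlim (fun i t => (hlintegral i t).le)
    ha_sum.tsum_ofReal_ne_top (ENNReal.ofReal_pos.2 hε)

/-- If `(aᵢ)` are nonnegative integrable random variables with `Σᵢ E[aᵢ] < ∞`,
and for each `i` the nonnegative integrable family `(Mᵢ(t))_{t ≥ 0}` satisfies
`E[aᵢ Mᵢ(t)] = E[aᵢ]` and `Mᵢ(t) → 0` a.s. as `t → ∞`, then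
`Σᵢ aᵢ Mᵢ(t) → 0` in probability as `t → ∞`. -/
theorem sum_tendsto_zero_in_probability {Ω : Type*} [MeasurableSpace Ω]
    (P : Measure Ω) [IsProbabilityMeasure P]
    (a : ℕ → Ω → ℝ) (ha_nn : ∀ i ω, 0 ≤ a i ω)
    (ha_int : ∀ i, Integrable (a i) P)
    (ha_sum : Summable fun i => ∫ ω, a i ω ∂P)
    (M : ℕ → ℝ≥0 → Ω → ℝ)
    (hM_nn : ∀ i t ω, 0 ≤ M i t ω)
    (hM_int : ∀ i t, Integrable (M i t) P)
    (haM_int : ∀ i t, Integrable (fun ω => a i ω * M i t ω) P)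
    (haM_mean : ∀ i t, ∫ ω, a i ω * M i t ω ∂P = ∫ ω, a i ω ∂P)
    (hM_as : ∀ i, ∀ᵐ ω ∂P, Tendsto (fun t : ℝ≥0 => M i t ω) atTop (nhds 0))
    (ε : ℝ) (hε : 0 < ε) :
    Tendsto (fun t : ℝ≥0 =>
        P {ω | ENNReal.ofReal ε < ∑' i, ENNReal.ofReal (a i ω * M i t ω)})
      atTop (nhds 0) :=
  sum_tendsto_zero_in_probability_general P a ha_nn ha_sum M hM_nn haM_int haM_mean hM_as ε hε
end
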